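/- Let n ≥ 1 be an integer and let p and q be probability measures on ℝ with finite n-th moments, with quantile functions P⁻¹ and Q⁻¹. Then W_n(p,q)^n ≤ ∫₀¹ |P⁻¹(t) − Q⁻¹(t)|^n dt, i.e. the cost of the comonotone coupling is an upper bound on the n-th power of the n-th Wasserstein distance. -/

import Mathlib

open MeasureTheory ProbabilityTheory Set

/-- The set of couplings of two measures: measures on the product space whose
first and second marginals are `p` and `q` respectively. -/
def couplings {α β : Type*} [MeasurableSpace α] [MeasurableSpace β]
    (p : Measure α) (q : Measure β) : Set (Measure (α × β)) :=
  {ν | ν.map Prod.fst = p ∧ ν.map Prod.snd = q}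

/-- The quantile function (generalized inverse CDF) of a measure on `ℝ`. -/
noncomputable def quantile (p : Measure ℝ) (t : ℝ) : ℝ :=
  sInf {x : ℝ | t ≤ cdf p x}

/-!
The quantile function pushes the uniform distribution on `(0,1)` forward to `p`, because on
`(0,1)` it is a lower adjoint of the CDF: `quantile p t ≤ x ↔ t ≤ cdf p x`. Pairing the quantile
functions of `p` and `q` therefore gives a coupling of `p` and `q` (the comonotone one), and its
transport cost is the right-hand side.
-/

theorem map_prodMk_mem_couplings {α β γ : Type*} [MeasurableSpace α] [MeasurableSpace β]
    [MeasurableSpace γ] {μ : Measure α} {X : α → β} {Y : α → γ}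
    (hX : AEMeasurable X μ) (hY : AEMeasurable Y μ) :
    μ.map (fun a => (X a, Y a)) ∈ couplings (μ.map X) (μ.map Y) :=
  ⟨Measure.fst_map_prodMk₀ hY, Measure.snd_map_prodMk₀ hX⟩

section Quantile

variable (p : Measure ℝ) {t : ℝ}

theorem nonempty_setOf_le_cdf (ht : t < 1) : {x | t ≤ cdf p x}.Nonempty :=
  ((tendsto_cdf_atTop p).eventually (eventually_ge_nhds ht)).exists

theorem bddBelow_setOf_le_cdf (ht : 0 < t) : BddBelow {x | t ≤ cdf p x} := by
  obtain ⟨y, hy⟩ := ((tendsto_cdf_atBot p).eventually (eventually_lt_nhds ht)).exists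
  refine ⟨y, fun x hx => le_of_not_gt fun hxy => ?_⟩
  exact (hx.trans (monotone_cdf p hxy.le)).not_gt hy

theorem le_cdf_quantile (ht : t ∈ Ioo (0 : ℝ) 1) : t ≤ cdf p (quantile p t) := by
  have hright : ∀ y > quantile p t, t ≤ cdf p y := fun y hy => by
    obtain ⟨x, hx, hxy⟩ := exists_lt_of_csInf_lt (nonempty_setOf_le_cdf p ht.2) hy
    exact hx.trans (monotone_cdf p hxy.le)
  have hcont := ((cdf p).right_continuous (quantile p t)).mono_left
    (nhdsWithin_mono _ Ioi_subset_Ici_self)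
  exact ge_of_tendsto hcont (eventually_nhdsWithin_of_forall hright)

theorem quantile_le_iff (ht : t ∈ Ioo (0 : ℝ) 1) (x : ℝ) : quantile p t ≤ x ↔ t ≤ cdf p x :=
  ⟨fun h => (le_cdf_quantile p ht).trans (monotone_cdf p h),
    fun h => csInf_le (bddBelow_setOf_le_cdf p ht.1) h⟩

theorem monotoneOn_quantile : MonotoneOn (quantile p) (Ioo 0 1) := fun _ hs _ ht hst =>
  (quantile_le_iff p hs _).2 (hst.trans ((quantile_le_iff p ht _).1 le_rfl))

theorem aemeasurable_quantile : AEMeasurable (quantile p) (volume.restrict (Ioo 0 1)) :=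
  aemeasurable_restrict_of_monotoneOn measurableSet_Ioo (monotoneOn_quantile p)

end Quantile

theorem volume_Ioo_zero_one_inter_Iic {c : ℝ} (hc : c ≤ 1) :
    volume (Ioo (0 : ℝ) 1 ∩ Iic c) = ENNReal.ofReal c := by
  refine le_antisymm ?_ ?_
  · calc volume (Ioo (0 : ℝ) 1 ∩ Iic c) ≤ volume (Ioc 0 c) :=
          measure_mono fun t ht => ⟨ht.1.1, ht.2⟩
      _ = ENNReal.ofReal c := by rw [Real.volume_Ioc, sub_zero]
  · calc ENNReal.ofReal c = volume (Ioo 0 c) := by rw [Real.volume_Ioo, sub_zero]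
      _ ≤ volume (Ioo (0 : ℝ) 1 ∩ Iic c) :=
          measure_mono fun t ht => ⟨⟨ht.1, ht.2.trans_le hc⟩, ht.2.le⟩

theorem map_quantile_volume (p : Measure ℝ) [IsProbabilityMeasure p] :
    (volume.restrict (Ioo 0 1)).map (quantile p) = p := by
  have : IsProbabilityMeasure (volume.restrict (Ioo (0 : ℝ) 1)) :=
    ⟨by simp [Real.volume_Ioo]⟩
  have := Measure.isProbabilityMeasure_map (aemeasurable_quantile p)
    (μ := volume.restrict (Ioo 0 1))
  refine Measure.ext_of_Iic _ _ fun x => ?_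
  have hpre : quantile p ⁻¹' Iic x ∩ Ioo 0 1 = Ioo 0 1 ∩ Iic (cdf p x) := by
    ext t
    simp only [mem_inter_iff, mem_preimage, mem_Iic]
    exact ⟨fun h => ⟨h.2, (quantile_le_iff p h.2 x).1 h.1⟩,
      fun h => ⟨(quantile_le_iff p h.1 x).2 h.2, h.1⟩⟩
  rw [Measure.map_apply_of_aemeasurable (aemeasurable_quantile p) measurableSet_Iic,
    Measure.restrict_apply' measurableSet_Ioo, hpre,
    volume_Ioo_zero_one_inter_Iic (cdf_le_one p x), ofReal_cdf]

theorem wasserstein_le_integral_quantile_general (n : ℕ)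
    (p q : Measure ℝ) [IsProbabilityMeasure p] [IsProbabilityMeasure q] :
    sInf ((fun ν => ∫⁻ z, edist z.1 z.2 ^ n ∂ν) '' couplings p q)
      ≤ ∫⁻ t in Ioo (0 : ℝ) 1, ENNReal.ofReal (|quantile p t - quantile q t| ^ n) := by
  have hp := aemeasurable_quantile p
  have hq := aemeasurable_quantile q
  have hcoupling := map_prodMk_mem_couplings hp hq
  rw [map_quantile_volume, map_quantile_volume] at hcoupling
  refine (sInf_le (mem_image_of_mem _ hcoupling)).trans_eq ?_
  rw [lintegral_map' ((measurable_fst.edist measurable_snd).pow_const n).aemeasurable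
    (hp.prodMk hq)]
  simp_rw [edist_dist, Real.dist_eq, ENNReal.ofReal_pow (abs_nonneg _)]

/-- The `n`-th power of the `n`-th Wasserstein distance between two probability measures
on `ℝ` with finite `n`-th moments is bounded above by the cost of the comonotone coupling,
i.e. the integral over `(0,1)` of the `n`-th power of the distance of the quantile
functions. -/
theorem wasserstein_le_integral_quantile (n : ℕ) (hn : 1 ≤ n)
    (p q : Measure ℝ) [IsProbabilityMeasure p] [IsProbabilityMeasure q]
    (hp : ∫⁻ x, (‖x‖₊ : ENNReal) ^ n ∂p ≠ ⊤)
    (hq : ∫⁻ x, (‖x‖₊ : ENNReal) ^ n ∂q ≠ ⊤) :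
    sInf ((fun ν => ∫⁻ z, edist z.1 z.2 ^ n ∂ν) '' couplings p q)
      ≤ ∫⁻ t in Ioo (0 : ℝ) 1, ENNReal.ofReal (|quantile p t - quantile q t| ^ n) :=
  wasserstein_le_integral_quantile_general n p q
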